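/- arXiv:1206.6345 — 6 statements merged into one kernel-verified Lean document; each statement's English description precedes it below -/
import Mathlib

section
/- Let k be a commutative ring with a derivation δ : k → k, and let δ act on matrices over k entrywise. Let A₀, B₁, …, B_r be n×n matrices over k such that δ(B_i) = 0 entrywise for all i, B_i · B_j = 0 for all i, j, and ⁅A₀, B₁⁆ = Σ_{i=1}^{r} γ_i • B_i for some γ₁, …, γ_r ∈ k. Let β₁, …, β_r ∈ k, set A := A₀ + Σ_{i=1}^{r} β_i • B_i, and suppose g ∈ k satisfies δ(g) = γ₁·g + β₁. Set P := 1 + g • B₁. Then P is invertible with inverse 1 − g • B₁, and the gauge transform satisfies P⁻¹ · (A·P − δ(P)) = A₀ + Σ_{i=2}^{r} (β_i + g·γ_i) • B_i; in particular the result contains no term in B₁. -/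
/-! The `Bᵢ` span a subspace `V` in which all products vanish. Hence `N = g • B₁` satisfies
`N² = 0`, so `P = 1 + N` has inverse `1 - N`, and the gauge transform expands to
`A + ⁅A, N⁆ - N ⁅A, N⁆ - δ(P) + N δ(P)`. Since `⁅A, N⁆ = g • ⁅A₀, B₁⁆` and `δ(P) = δ(g) • B₁`
both lie in `V`, this is `A + g • Σ γᵢ • Bᵢ - δ(g) • B₁`, and the equation for `δ(g)` cancels
exactly the `B₁`-coefficient. -/

open Matrix Finset
open scoped Pointwise

section SquareZero

variable {R : Type*} [Ring R]

theorem one_add_mul_one_sub_of_mul_self_eq_zero {N : R} (hN : N * N = 0) :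
    (1 + N) * (1 - N) = 1 := by
  rw [mul_sub, mul_one, add_mul, one_mul, hN]
  abel

theorem one_sub_mul_one_add_of_mul_self_eq_zero {N : R} (hN : N * N = 0) :
    (1 - N) * (1 + N) = 1 := by
  rw [sub_mul, one_mul, mul_add, mul_one, hN]
  abel

theorem isUnit_one_add_of_mul_self_eq_zero {N : R} (hN : N * N = 0) : IsUnit (1 + N) :=
  ⟨⟨1 + N, 1 - N, one_add_mul_one_sub_of_mul_self_eq_zero hN,
    one_sub_mul_one_add_of_mul_self_eq_zero hN⟩, rfl⟩

theorem one_sub_mul_gauge_eq (A N D : R) :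
    (1 - N) * (A * (1 + N) - D) = A + ⁅A, N⁆ - N * N * A - N * ⁅A, N⁆ - D + N * D := by
  rw [Ring.lie_def]
  noncomm_ring

end SquareZero

theorem Submodule.mul_eq_zero_of_mem_span {k R ι : Type*} [CommSemiring k] [Semiring R]
    [Algebra k R] {B : ι → R} (hB : ∀ i j, B i * B j = 0) {x y : R}
    (hx : x ∈ span k (Set.range B)) (hy : y ∈ span k (Set.range B)) : x * y = 0 := by
  have hxy := mul_mem_mul hx hy
  have hbot : span k (Set.range B * Set.range B) = ⊥ := by
    rw [span_eq_bot]
    rintro _ ⟨_, ⟨i, rfl⟩, _, ⟨j, rfl⟩, rfl⟩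
    exact hB i j
  rwa [span_mul_span, hbot, mem_bot] at hxy

section Leibniz

variable {k : Type*} [CommRing k] {δ : k → k}

theorem apply_zero_eq_zero_of_leibniz (hδmul : ∀ a b : k, δ (a * b) = a * δ b + δ a * b) :
    δ 0 = 0 := by
  simpa using hδmul 0 0

theorem apply_one_eq_zero_of_leibniz (hδmul : ∀ a b : k, δ (a * b) = a * δ b + δ a * b) :
    δ 1 = 0 := by
  simpa using hδmul 1 1

theorem Matrix.map_one_add_smul_of_map_eq_zero {m : Type*} [DecidableEq m]
    (hδadd : ∀ a b : k, δ (a + b) = δ a + δ b)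
    (hδmul : ∀ a b : k, δ (a * b) = a * δ b + δ a * b)
    (g : k) {M : Matrix m m k} (hM : M.map δ = 0) :
    (1 + g • M).map δ = δ g • M := by
  ext i j
  have hMij : δ (M i j) = 0 := congrFun (congrFun hM i) j
  simp only [map_apply, add_apply, smul_apply, smul_eq_mul, one_apply, hδadd, hδmul, hMij]
  split_ifs <;>
    simp [apply_zero_eq_zero_of_leibniz hδmul, apply_one_eq_zero_of_leibniz hδmul]

end Leibniz

/-- Partial reduction of a linear differential system: if `⁅A₀, B₁⁆ = Σ γᵢ • Bᵢ`, the `Bᵢ`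
are constant and pairwise annihilate each other, and `g` solves `g' = γ₁ g + β₁`, then the
gauge transformation by `P = 1 + g • B₁` removes the `B₁`-term from
`A = A₀ + Σ βᵢ • Bᵢ`. -/
theorem partial_reduction
    (k : Type*) [CommRing k] (δ : k → k)
    (hδadd : ∀ a b : k, δ (a + b) = δ a + δ b)
    (hδmul : ∀ a b : k, δ (a * b) = a * δ b + δ a * b)
    (n r : ℕ)
    (A₀ : Matrix (Fin n) (Fin n) k) (B : Fin (r + 1) → Matrix (Fin n) (Fin n) k)
    (hBconst : ∀ i, (B i).map δ = 0)
    (hBmul : ∀ i j, B i * B j = 0)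
    (γ : Fin (r + 1) → k)
    (hbracket : ⁅A₀, B 0⁆ = ∑ i, γ i • B i)
    (β : Fin (r + 1) → k)
    (A : Matrix (Fin n) (Fin n) k) (hA : A = A₀ + ∑ i, β i • B i)
    (g : k) (hg : δ g = γ 0 * g + β 0)
    (P : Matrix (Fin n) (Fin n) k) (hP : P = 1 + g • B 0) :
    IsUnit P ∧ P⁻¹ = 1 - g • B 0 ∧
      P⁻¹ * (A * P - P.map δ) =
        A₀ + ∑ i ∈ Finset.univ.erase 0, (β i + g * γ i) • B i := by
  set V := Submodule.span k (Set.range B)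
  have hV {x y} (hx : x ∈ V) (hy : y ∈ V) : x * y = 0 :=
    Submodule.mul_eq_zero_of_mem_span hBmul hx hy
  have hsum (c : Fin (r + 1) → k) : ∑ i, c i • B i ∈ V :=
    Submodule.mem_span_range_iff_exists_fun k |>.mpr ⟨c, rfl⟩
  have hB0 : B 0 ∈ V := Submodule.subset_span ⟨0, rfl⟩
  set N := g • B 0 with hNdef
  have hN : N ∈ V := V.smul_mem g hB0
  have hNN : N * N = 0 := hV hN hN
  have hPinv : P⁻¹ = 1 - N :=
    hP ▸ inv_eq_right_inv (one_add_mul_one_sub_of_mul_self_eq_zero hNN)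
  refine ⟨hP ▸ isUnit_one_add_of_mul_self_eq_zero hNN, hPinv, ?_⟩
  have hPmap : P.map δ = δ g • B 0 :=
    hP ▸ map_one_add_smul_of_map_eq_zero hδadd hδmul g (hBconst 0)
  have hAN : ⁅A, N⁆ = g • ∑ i, γ i • B i := by
    rw [Ring.lie_def, hA, add_mul, mul_add, hV (hsum β) hN, hV hN (hsum β), hNdef,
      mul_smul_comm, smul_mul_assoc, ← hbracket, Ring.lie_def, smul_sub]
    abel
  rw [hPinv, hPmap, hP, one_sub_mul_gauge_eq, hNN, hAN, hV hN (V.smul_mem g (hsum γ)),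
    hV hN (V.smul_mem _ hB0), hA, hg, sum_erase_eq_sub (mem_univ 0)]
  simp only [zero_mul, add_smul, mul_smul, sum_add_distrib, ← smul_sum]
  rw [smul_comm (γ 0) g]
  abel
end

section
/- Let k be a field, C a subfield of k, and A an n×n matrix over k. Suppose A = Σ_{i=1}^{r} a_i • (M_i mapped into k) = Σ_{j=1}^{s} b_j • (N_j mapped into k), where a₁,…,a_r ∈ k are linearly independent over C, b₁,…,b_s ∈ k are linearly independent over C, and M₁,…,M_r, N₁,…,N_s are n×n matrices with entries in C. Then the C-linear span of {M₁,…,M_r} in the space of n×n matrices over C equals the C-linear span of {N₁,…,N_s}. (Uniqueness of the Wei–Norman decomposition.) -/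
/-!
Applying a `C`-linear functional `φ : k → C` entrywise to `A = ∑ aᵢ • Mᵢ` gives `∑ φ(aᵢ) • Mᵢ`,
so these matrices all lie in the span of the `Mᵢ`. Conversely, since the `aᵢ` are linearly
independent, for each `i` some functional sends `aⱼ` to `δᵢⱼ`, and it recovers `Mᵢ` itself.
Hence the span of the `Mᵢ` is `{A.map φ}`, which depends only on `A`.
-/

open Matrix

theorem Matrix.map_sum_smul_map_algebraMap {R S ι m n : Type*} [CommSemiring R] [Semiring S]
    [Algebra R S] [Fintype ι] (φ : S →ₗ[R] R) (a : ι → S) (M : ι → Matrix m n R) :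
    (∑ i, a i • (M i).map (algebraMap R S)).map φ = ∑ i, φ (a i) • M i := by
  ext p q
  simp only [map_apply, sum_apply, smul_apply, smul_eq_mul, ← Algebra.commutes,
    ← Algebra.smul_def, map_sum, map_smul, mul_comm]

theorem LinearIndependent.exists_dual_apply_eq_single {K V ι : Type*} [Field K] [AddCommGroup V]
    [Module K V] {a : ι → V} (ha : LinearIndependent K a) (i : ι) :
    ∃ φ : Module.Dual K V, ∀ j, φ (a j) = Finsupp.single i 1 j := by
  obtain ⟨φ, hφ⟩ := LinearMap.exists_extend ((Module.Basis.span ha).coord i)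
  refine ⟨φ, fun j => ?_⟩
  calc φ (a j) = (φ ∘ₗ (Submodule.span K (Set.range a)).subtype) (Module.Basis.span ha j) := by
        rw [LinearMap.comp_apply, Module.Basis.span_apply]; rfl
    _ = Finsupp.single i 1 j := by
        classical
        rw [hφ, Module.Basis.coord_apply, Module.Basis.repr_self, Finsupp.single_apply,
          Finsupp.single_apply]
        simp only [eq_comm]

theorem Matrix.mem_span_range_iff_exists_map_eq {K L ι m n : Type*} [Field K] [Ring L]
    [Algebra K L] [Fintype ι] {a : ι → L} (ha : LinearIndependent K a) (M : ι → Matrix m n K)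
    {A : Matrix m n L} (hA : A = ∑ i, a i • (M i).map (algebraMap K L)) (X : Matrix m n K) :
    X ∈ Submodule.span K (Set.range M) ↔ ∃ φ : Module.Dual K L, A.map φ = X := by
  simp_rw [hA, map_sum_smul_map_algebraMap]
  constructor
  · intro hX
    induction hX using Submodule.span_induction with
    | mem _ hX =>
      obtain ⟨i, rfl⟩ := hX
      obtain ⟨φ, hφ⟩ := ha.exists_dual_apply_eq_single i
      refine ⟨φ, ?_⟩
      simp_rw [hφ]
      rw [Fintype.sum_eq_single i fun j hj => by simp [Finsupp.single_eq_of_ne hj],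
        Finsupp.single_eq_same, one_smul]
    | zero => exact ⟨0, by simp⟩
    | add _ _ _ _ hX hY =>
      obtain ⟨φ, rfl⟩ := hX
      obtain ⟨ψ, rfl⟩ := hY
      exact ⟨φ + ψ, by simp [add_smul, Finset.sum_add_distrib]⟩
    | smul c _ _ hX =>
      obtain ⟨φ, rfl⟩ := hX
      exact ⟨c • φ, by simp [Finset.smul_sum, mul_smul]⟩
  · rintro ⟨φ, rfl⟩
    exact Submodule.sum_mem _ fun i _ => Submodule.smul_mem _ _ (Submodule.subset_span ⟨i, rfl⟩)

/-- Uniqueness of the Wei–Norman decomposition: if a matrix over `k` has two Wei–Norman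
decompositions with respect to a subfield `C` of `k`, then the `C`-spans of the two families
of constant matrices coincide. -/
theorem weiNorman_unique
    (k : Type*) [Field k] (C : Subfield k) (n r s : ℕ)
    (A : Matrix (Fin n) (Fin n) k)
    (a : Fin r → k) (b : Fin s → k)
    (M : Fin r → Matrix (Fin n) (Fin n) C) (N : Fin s → Matrix (Fin n) (Fin n) C)
    (ha : LinearIndependent C a) (hb : LinearIndependent C b)
    (hM : A = ∑ i, a i • (M i).map (fun c => (c : k)))
    (hN : A = ∑ j, b j • (N j).map (fun c => (c : k))) :
    Submodule.span C (Set.range M) = Submodule.span C (Set.range N) := by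
  ext X
  rw [mem_span_range_iff_exists_map_eq ha M hM, mem_span_range_iff_exists_map_eq hb N hN]
end

section
/- Let k be a field of characteristic zero with a derivation δ : k → k, acting on matrices entrywise, and let x ∈ k satisfy δ(x) = 1, x ≠ 0 and x² + 1 ≠ 0. Define the 4×4 matrices over k: A₁ with rows [0, 0, 2/x, 0], [0, 0, 0, 2/x], [2(x⁴ − 10x² + 1)/(x(x²+1)²), 0, 0, 0], [0, −12x/(x²+1)², 0, 0]; and P₁ with rows [−6(x−1)(x+1)x²/(x²+1)³, 0, −(x¹⁰ + 15x⁸ − 16x⁶ − 144x⁴ + 15x² + 1)/(12x²(x²+1)³), 0], [0, (x⁴ − 4x² + 1)/(x²+1)², 0, −(5x⁴ + 16x² − 13)/(3(x²+1)²)], [6x²(x⁴ − 4x² + 1)/(x²+1)⁴, 0, −(x¹² + 4x¹⁰ + 121x⁸ + 256x⁶ − 249x⁴ − 4x² − 1)/(12x²(x²+1)⁴), 0], [0, 6(x² − 1)x²/(x²+1)³, 0, (x⁶ − x⁴ − 17x² + 1)/(x²+1)³]. Then P₁ is invertible and the gauge transform satisfies P₁⁻¹·(A₁·P₁ − δ(P₁))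 = (5/(3x)) • D, where D is the constant matrix with rows [0,0,1,0], [0,0,0,6/5], [0,0,0,0], [0,0,0,0]. -/
open Matrix

/-!
`P₁` has determinant `1`: it is block diagonal on the coordinates `{0, 2}` and `{1, 3}`, with
two unimodular 2×2 blocks. The gauge identity is then equivalent to
`A₁ P₁ - δ(P₁) = P₁ ((5/(3x)) • D)`, which is checked entrywise: since `δ x = 1` and `δ` kills integers, `δ` acts on rational expressions in `x`
as `d/dx`, and every entry becomes an identity of rational functions.
-/

namespace Derivation

def ofLeibniz {k : Type*} [CommRing k] (δ : k → k)
    (hadd : ∀ a b : k, δ (a + b) = δ a + δ b)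
    (hmul : ∀ a b : k, δ (a * b) = a * δ b + δ a * b) : Derivation ℤ k k :=
  mk' (AddMonoidHom.mk' δ hadd).toIntLinearMap fun a b => by
    simp [hmul, mul_comm]

@[simp]
theorem coe_ofLeibniz {k : Type*} [CommRing k] (δ : k → k)
    (hadd : ∀ a b : k, δ (a + b) = δ a + δ b)
    (hmul : ∀ a b : k, δ (a * b) = a * δ b + δ a * b) : ⇑(ofLeibniz δ hadd hmul) = δ :=
  rfl

@[simp]
theorem map_ofNat {R A M : Type*} [CommSemiring R] [CommSemiring A] [AddCommMonoid M]
    [Algebra R A] [Module A M] [Module R M] (D : Derivation R A M) (n : ℕ) [n.AtLeastTwo] :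
    D (ofNat(n) : A) = 0 :=
  D.map_natCast n

end Derivation

theorem Matrix.isUnit_and_inv_mul_eq_of_eq_mul {n R : Type*} [Fintype n] [DecidableEq n]
    [CommRing R] {P B M : Matrix n n R} (hP : IsUnit P.det) (hM : M = P * B) :
    IsUnit P ∧ P⁻¹ * M = B :=
  ⟨(isUnit_iff_isUnit_det P).2 hP, hM ▸ nonsing_inv_mul_cancel_left P B hP⟩

namespace HenonHeiles

variable {k : Type*} [Field k]

def A₁ (x : k) : Matrix (Fin 4) (Fin 4) k :=
  !![0, 0, 2/x, 0;
     0, 0, 0, 2/x;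
     2*(x^4 - 10*x^2 + 1)/(x*(x^2+1)^2), 0, 0, 0;
     0, -12*x/(x^2+1)^2, 0, 0]

def P₁ (x : k) : Matrix (Fin 4) (Fin 4) k :=
  !![-6*(x-1)*(x+1)*x^2/(x^2+1)^3, 0,
       -(x^10 + 15*x^8 - 16*x^6 - 144*x^4 + 15*x^2 + 1)/(12*x^2*(x^2+1)^3), 0;
     0, (x^4 - 4*x^2 + 1)/(x^2+1)^2, 0,
       -(5*x^4 + 16*x^2 - 13)/(3*(x^2+1)^2);
     6*x^2*(x^4 - 4*x^2 + 1)/(x^2+1)^4, 0,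
       -(x^12 + 4*x^10 + 121*x^8 + 256*x^6 - 249*x^4 - 4*x^2 - 1)/(12*x^2*(x^2+1)^4), 0;
     0, 6*(x^2 - 1)*x^2/(x^2+1)^3, 0,
       (x^6 - x^4 - 17*x^2 + 1)/(x^2+1)^3]

def D : Matrix (Fin 4) (Fin 4) k :=
  !![0, 0, 1, 0;
     0, 0, 0, 6/5;
     0, 0, 0, 0;
     0, 0, 0, 0]

variable [CharZero k] {x : k}

theorem det_P₁ (hx0 : x ≠ 0) (hx1 : x ^ 2 + 1 ≠ 0) : (P₁ x).det = 1 := by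
  rw [P₁, det_succ_row_zero]
  simp [Fin.sum_univ_succ, det_fin_three, Fin.succAbove]
  field_simp
  ring

theorem A₁_mul_P₁_sub_map {R : Type*} [CommRing R] [Algebra R k] (δ : Derivation R k k)
    (hx : δ x = 1) (hx0 : x ≠ 0) (hx1 : x ^ 2 + 1 ≠ 0) :
    A₁ x * P₁ x - (P₁ x).map δ = P₁ x * ((5 / (3 * x)) • D) := by
  ext i j
  fin_cases i <;> fin_cases j <;>
    simp [A₁, P₁, D, mul_apply, Fin.sum_univ_four, Derivation.leibniz_div, Derivation.leibniz,
      Derivation.leibniz_pow, hx] <;>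
    field_simp <;> ring

end HenonHeiles

/-- Reduction of the first variational equation of the degenerate Hénon–Heiles system:
the explicit matrix `P₁` is invertible and gauge-transforms `A₁` into the reduced form
`(5/(3x)) • D`. -/
theorem henonHeiles_VE1_reduction
    (k : Type*) [Field k] [CharZero k] (δ : k → k)
    (hδadd : ∀ a b : k, δ (a + b) = δ a + δ b)
    (hδmul : ∀ a b : k, δ (a * b) = a * δ b + δ a * b)
    (x : k) (hx : δ x = 1) (hx0 : x ≠ 0) (hx1 : x ^ 2 + 1 ≠ 0)
    (A₁ P₁ D : Matrix (Fin 4) (Fin 4) k)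
    (hA₁ : A₁ = !![0, 0, 2/x, 0;
                   0, 0, 0, 2/x;
                   2*(x^4 - 10*x^2 + 1)/(x*(x^2+1)^2), 0, 0, 0;
                   0, -12*x/(x^2+1)^2, 0, 0])
    (hP₁ : P₁ = !![-6*(x-1)*(x+1)*x^2/(x^2+1)^3, 0,
                     -(x^10 + 15*x^8 - 16*x^6 - 144*x^4 + 15*x^2 + 1)/(12*x^2*(x^2+1)^3), 0;
                   0, (x^4 - 4*x^2 + 1)/(x^2+1)^2, 0,
                     -(5*x^4 + 16*x^2 - 13)/(3*(x^2+1)^2);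
                   6*x^2*(x^4 - 4*x^2 + 1)/(x^2+1)^4, 0,
                     -(x^12 + 4*x^10 + 121*x^8 + 256*x^6 - 249*x^4 - 4*x^2 - 1)/(12*x^2*(x^2+1)^4), 0;
                   0, 6*(x^2 - 1)*x^2/(x^2+1)^3, 0,
                     (x^6 - x^4 - 17*x^2 + 1)/(x^2+1)^3])
    (hD : D = !![0, 0, 1, 0;
                 0, 0, 0, 6/5;
                 0, 0, 0, 0;
                 0, 0, 0, 0]) :
    IsUnit P₁ ∧ P₁⁻¹ * (A₁ * P₁ - P₁.map δ) = (5/(3*x)) • D := by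
  subst hA₁ hP₁ hD
  have hgauge := HenonHeiles.A₁_mul_P₁_sub_map (Derivation.ofLeibniz δ hδadd hδmul) hx hx0 hx1
  rw [Derivation.coe_ofLeibniz] at hgauge
  have hdet : IsUnit (HenonHeiles.P₁ x).det := by
    rw [HenonHeiles.det_P₁ hx0 hx1]
    exact isUnit_one
  exact isUnit_and_inv_mul_eq_of_eq_mul hdet hgauge
end

section
/- Let L be a nonzero rational function over ℂ, written in lowest terms as L = a/b with a, b polynomials, such that b is squarefree, b is not a unit, and deg a < deg b (i.e., L is a nonzero proper rational function having only simple poles). Then there is no rational function g over ℂ whose derivative equals L, where the derivative on ℂ(X) is the unique derivation extending the derivative of polynomials (so that (p/q)' = (p'q − pq')/q²). -/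
/-!
Since `g = p/q` has derivative `W(q, p)/q²`, where `W(q, p) = q p' - q' p` is the Wronskian, it
suffices to see that `ord_c W(q, p) - 2 ord_c q` is never `-1`, whereas at a root `c` of the
squarefree denominator `b` (where `a` does not vanish) the order of `a/b` is exactly `-1`.
Writing `p = (X - c)^k P`, `q = (X - c)^m Q` with `P(c) Q(c) ≠ 0`, one finds
`(X - c) W(q, p) = (X - c)^(k+m) ((k - m) P Q + (X - c) W(Q, P))`: for `k ≠ m` the order of the
Wronskian is `k + m - 1 ≠ 2m - 1`, and for `k = m` it is at least `2m`.
-/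

open Polynomial

namespace Polynomial

section CommRing

variable {R : Type*} [CommRing R]

theorem X_sub_C_mul_derivative_X_sub_C_pow_mul (c : R) (k : ℕ) (f : R[X]) :
    (X - C c) * derivative ((X - C c) ^ k * f) =
      (X - C c) ^ k * (C (k : R) * f + (X - C c) * derivative f) := by
  rw [derivative_mul, derivative_X_sub_C_pow]
  cases k with
  | zero => simp
  | succ k =>
    rw [Nat.add_sub_cancel]
    ring

theorem X_sub_C_mul_wronskian_X_sub_C_pow_mul (c : R) (m k : ℕ) (f g : R[X]) :
    (X - C c) * wronskian ((X - C c) ^ m * f) ((X - C c) ^ k * g) =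
      (X - C c) ^ (m + k) * (C ((k : R) - m) * (f * g) + (X - C c) * wronskian f g) := by
  rw [wronskian, wronskian, pow_add, C_sub]
  linear_combination ((X - C c) ^ m * f) * X_sub_C_mul_derivative_X_sub_C_pow_mul c k g -
    ((X - C c) ^ k * g) * X_sub_C_mul_derivative_X_sub_C_pow_mul c m f

theorem exists_X_sub_C_mul_wronskian_eq {f g : R[X]} (hf : f ≠ 0) (hg : g ≠ 0) (c : R) :
    ∃ F G : R[X], F.eval c ≠ 0 ∧ G.eval c ≠ 0 ∧
      (X - C c) * wronskian f g = (X - C c) ^ (f.rootMultiplicity c + g.rootMultiplicity c) *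
        (C ((g.rootMultiplicity c : R) - f.rootMultiplicity c) * (F * G) +
          (X - C c) * wronskian F G) := by
  obtain ⟨F, hfF, hF⟩ := f.exists_eq_pow_rootMultiplicity_mul_and_not_dvd hf c
  obtain ⟨G, hgG, hG⟩ := g.exists_eq_pow_rootMultiplicity_mul_and_not_dvd hg c
  refine ⟨F, G, mt dvd_iff_isRoot.mpr hF, mt dvd_iff_isRoot.mpr hG, ?_⟩
  conv_lhs => rw [hfF, hgG]
  exact X_sub_C_mul_wronskian_X_sub_C_pow_mul c _ _ F G

end CommRing

section Domain

variable {R : Type*} [CommRing R] [IsDomain R]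

theorem Squarefree.rootMultiplicity_le_one {f : R[X]} (hf : Squarefree f) (c : R) :
    f.rootMultiplicity c ≤ 1 := by
  by_contra! h
  have hdvd : (X - C c) * (X - C c) ∣ f := by
    rw [← sq]
    exact (le_rootMultiplicity_iff hf.ne_zero).mp h
  exact not_isUnit_X_sub_C c (hf _ hdvd)

variable [CharZero R]

theorem rootMultiplicity_wronskian_add_one_of_ne {f g : R[X]} (hf : f ≠ 0) (hg : g ≠ 0) {c : R}
    (hfg : f.rootMultiplicity c ≠ g.rootMultiplicity c) :
    (wronskian f g).rootMultiplicity c + 1 = f.rootMultiplicity c + g.rootMultiplicity c := by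
  obtain ⟨F, G, hF, hG, h⟩ := exists_X_sub_C_mul_wronskian_eq hf hg c
  set r := C ((g.rootMultiplicity c : R) - f.rootMultiplicity c) * (F * G) +
    (X - C c) * wronskian F G
  have hr : r.eval c ≠ 0 := by
    have hk : (g.rootMultiplicity c : R) - f.rootMultiplicity c ≠ 0 :=
      sub_ne_zero.mpr (Nat.cast_injective.ne (Ne.symm hfg))
    simpa [r] using mul_ne_zero hk (mul_ne_zero hF hG)
  have hr0 : r ≠ 0 := fun h0 => hr (by simp [h0])
  have hlhs : (X - C c) * wronskian f g ≠ 0 :=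
    h ▸ mul_ne_zero (pow_ne_zero _ (X_sub_C_ne_zero c)) hr0
  have := congrArg (rootMultiplicity c) h
  rw [rootMultiplicity_mul hlhs, rootMultiplicity_mul (h ▸ hlhs), rootMultiplicity_X_sub_C_self,
    rootMultiplicity_X_sub_C_pow, rootMultiplicity_eq_zero hr] at this
  omega

theorem add_le_rootMultiplicity_wronskian_of_eq {f g : R[X]} (hf : f ≠ 0) (hg : g ≠ 0) {c : R}
    (hfg : f.rootMultiplicity c = g.rootMultiplicity c) (hW : wronskian f g ≠ 0) :
    f.rootMultiplicity c + g.rootMultiplicity c ≤ (wronskian f g).rootMultiplicity c := by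
  obtain ⟨F, G, -, -, h⟩ := exists_X_sub_C_mul_wronskian_eq hf hg c
  rw [hfg, sub_self, map_zero, zero_mul, zero_add, ← mul_assoc, ← pow_succ] at h
  rw [le_rootMultiplicity_iff hW, hfg, ← mul_dvd_mul_iff_left (X_sub_C_ne_zero c), h,
    ← pow_succ']
  exact dvd_mul_right _ _

theorem rootMultiplicity_wronskian_add_one_ne_two_mul {f : R[X]} (hf : f ≠ 0) (g : R[X])
    (c : R) : (wronskian f g).rootMultiplicity c + 1 ≠ 2 * f.rootMultiplicity c := by
  by_cases hW : wronskian f g = 0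
  · rw [hW, rootMultiplicity_zero]
    omega
  have hg : g ≠ 0 := by
    rintro rfl
    exact hW (wronskian_zero_right f)
  by_cases hfg : f.rootMultiplicity c = g.rootMultiplicity c
  · have := add_le_rootMultiplicity_wronskian_of_eq hf hg hfg hW
    omega
  · have := rootMultiplicity_wronskian_add_one_of_ne hf hg hfg
    omega

end Domain

end Polynomial

theorem no_rational_antiderivative_simple_poles_general
    (L : RatFunc ℂ)
    (a b : Polynomial ℂ)
    (hcop : IsCoprime a b)
    (hsf : Squarefree b) (hbu : ¬ IsUnit b)
    (hL : L = algebraMap (Polynomial ℂ) (RatFunc ℂ) a /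
              algebraMap (Polynomial ℂ) (RatFunc ℂ) b) :
    ¬ ∃ p q : Polynomial ℂ, q ≠ 0 ∧
        algebraMap (Polynomial ℂ) (RatFunc ℂ) (derivative p * q - p * derivative q) /
          algebraMap (Polynomial ℂ) (RatFunc ℂ) (q ^ 2) = L := by
  rintro ⟨p, q, hq, hpq⟩
  have hb : b ≠ 0 := hsf.ne_zero
  obtain ⟨c, hc⟩ := Complex.exists_root (degree_pos_of_ne_zero_of_nonunit hb hbu)
  have hac : ¬ a.IsRoot c := by
    simpa [hc.eq_zero] using aeval_ne_zero_of_isCoprime hcop c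
  have hbc : b.rootMultiplicity c = 1 :=
    le_antisymm (hsf.rootMultiplicity_le_one c) ((rootMultiplicity_pos hb).mpr hc)
  have hcross : wronskian q p * b = a * q ^ 2 := by
    have h := hpq.trans hL
    rw [div_eq_div_iff (RatFunc.algebraMap_ne_zero (pow_ne_zero 2 hq))
      (RatFunc.algebraMap_ne_zero hb), ← map_mul, ← map_mul] at h
    rw [wronskian, ← RatFunc.algebraMap_injective ℂ h]
    ring
  have hrhs : a * q ^ 2 ≠ 0 := mul_ne_zero (fun ha => hac (by simp [ha])) (pow_ne_zero 2 hq)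
  apply rootMultiplicity_wronskian_add_one_ne_two_mul hq p c
  have := congrArg (rootMultiplicity c) hcross
  rw [rootMultiplicity_mul (hcross ▸ hrhs), rootMultiplicity_mul hrhs, hbc,
    rootMultiplicity_eq_zero hac, sq, rootMultiplicity_mul (mul_ne_zero hq hq)] at this
  omega

/-- A nonzero proper rational function with only simple poles (lowest-terms denominator
squarefree and not a unit) has no antiderivative in `ℂ(X)`: no rational function `g = p/q`
has derivative `(p'q − pq')/q²` equal to `L`. -/
theorem no_rational_antiderivative_simple_poles
    (L : RatFunc ℂ) (hL0 : L ≠ 0)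
    (a b : Polynomial ℂ)
    (hcop : IsCoprime a b)
    (hsf : Squarefree b) (hbu : ¬ IsUnit b)
    (hdeg : a.natDegree < b.natDegree)
    (hL : L = algebraMap (Polynomial ℂ) (RatFunc ℂ) a /
              algebraMap (Polynomial ℂ) (RatFunc ℂ) b) :
    ¬ ∃ p q : Polynomial ℂ, q ≠ 0 ∧
        algebraMap (Polynomial ℂ) (RatFunc ℂ) (derivative p * q - p * derivative q) /
          algebraMap (Polynomial ℂ) (RatFunc ℂ) (q ^ 2) = L :=
  no_rational_antiderivative_simple_poles_general L a b hcop hsf hbu hL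
end

section
/- For every rational function f over ℂ there exist rational functions g and h over ℂ such that f = g' + h, where h can be written as a quotient a/b of polynomials with b squarefree (i.e., h has only simple poles), and g' denotes the derivative of g in ℂ(X). -/
/-!
Hermite reduction. If the denominator of `a / b` is not squarefree, write `b = d ^ (m + 2) * c` with
`d` irreducible and `d ∤ c`. In characteristic zero `d` is separable, so `d' * c` is invertible
modulo `d` and `a = -(m + 1) s d' c + d u` for some `s, u`. Then
`a / b = (s / d ^ (m + 1))' + (u - s' c) / (c d ^ (m + 1))`, and the last denominator has smaller
degree. Iterating leaves a squarefree denominator, and the derivatives split off along the way add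
up by the quotient rule.
-/

open Polynomial
open scoped RatFunc

section Squarefree

variable {α : Type*} [CommMonoidWithZero α] [IsCancelMulZero α] [WfDvdMonoid α]

theorem exists_eq_irreducible_pow_mul_of_not_squarefree {b : α} (hb : b ≠ 0)
    (hsf : ¬Squarefree b) : ∃ (d c : α) (m : ℕ), Irreducible d ∧ ¬d ∣ c ∧ b = d ^ (m + 2) * c := by
  obtain ⟨d, hd, hdd⟩ : ∃ d, Irreducible d ∧ d * d ∣ b := by
    simpa [squarefree_iff_irreducible_sq_not_dvd_of_ne_zero hb] using hsf
  have hfin := FiniteMultiplicity.of_not_isUnit hd.not_isUnit hb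
  obtain ⟨c, hbc, hdc⟩ := hfin.exists_eq_pow_mul_and_not_dvd
  have h2 : 2 ≤ multiplicity d b := hfin.le_multiplicity_of_pow_dvd (by rwa [sq])
  exact ⟨d, c, multiplicity d b - 2, hd, hdc, by rwa [Nat.sub_add_cancel h2]⟩

end Squarefree

namespace RatFunc

variable {K : Type*} [Field K]

/-- `(p / q)'`, by the quotient rule. -/
noncomputable def quotDeriv (p q : K[X]) : K⟮X⟯ :=
  algebraMap K[X] K⟮X⟯ (derivative p * q - p * derivative q) / algebraMap K[X] K⟮X⟯ (q ^ 2)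

def HasAntideriv (f : K⟮X⟯) : Prop :=
  ∃ p q : K[X], q ≠ 0 ∧ f = quotDeriv p q

def HasSimplePoles (f : K⟮X⟯) : Prop :=
  ∃ a b : K[X], Squarefree b ∧ f = algebraMap K[X] K⟮X⟯ a / algebraMap K[X] K⟮X⟯ b

theorem quotDeriv_add_quotDeriv {p₀ q₀ p₁ q₁ : K[X]} (h₀ : q₀ ≠ 0) (h₁ : q₁ ≠ 0) :
    quotDeriv p₀ q₀ + quotDeriv p₁ q₁ = quotDeriv (p₀ * q₁ + p₁ * q₀) (q₀ * q₁) := by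
  have e₀ := algebraMap_ne_zero h₀
  have e₁ := algebraMap_ne_zero h₁
  simp only [quotDeriv, derivative_mul, map_sub, map_add, map_mul, map_pow]
  field_simp
  ring

theorem HasAntideriv.zero : HasAntideriv (0 : K⟮X⟯) :=
  ⟨0, 1, one_ne_zero, by simp [quotDeriv]⟩

theorem HasAntideriv.add {f g : K⟮X⟯} (hf : HasAntideriv f) (hg : HasAntideriv g) :
    HasAntideriv (f + g) := by
  obtain ⟨p₀, q₀, h₀, rfl⟩ := hf
  obtain ⟨p₁, q₁, h₁, rfl⟩ := hg
  exact ⟨_, _, mul_ne_zero h₀ h₁, quotDeriv_add_quotDeriv h₀ h₁⟩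

theorem algebraMap_div_eq_quotDeriv_add {a c d s u : K[X]} {m : ℕ} (hd : d ≠ 0) (hc : c ≠ 0)
    (ha : a = -(m + 1) * s * derivative d * c + d * u) :
    algebraMap K[X] K⟮X⟯ a / algebraMap K[X] K⟮X⟯ (d ^ (m + 2) * c) =
      quotDeriv s (d ^ (m + 1)) +
        algebraMap K[X] K⟮X⟯ (u - derivative s * c) / algebraMap K[X] K⟮X⟯ (c * d ^ (m + 1)) := by
  have ed := algebraMap_ne_zero hd
  have ec := algebraMap_ne_zero hc
  subst ha
  simp only [quotDeriv, derivative_pow, add_tsub_cancel_right, map_sub, map_add, map_mul,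
    map_pow, map_neg, map_natCast, map_one]
  field_simp
  push_cast
  ring

theorem exists_hasAntideriv_add_div_of_not_squarefree [CharZero K] (a : K[X]) {b : K[X]}
    (hb : b ≠ 0) (hsf : ¬Squarefree b) :
    ∃ (g : K⟮X⟯) (a₁ b₁ : K[X]), HasAntideriv g ∧ b₁ ≠ 0 ∧ b₁.natDegree < b.natDegree ∧
      algebraMap K[X] K⟮X⟯ a / algebraMap K[X] K⟮X⟯ b =
        g + algebraMap K[X] K⟮X⟯ a₁ / algebraMap K[X] K⟮X⟯ b₁ := by
  obtain ⟨d, c, m, hd, hdc, rfl⟩ := exists_eq_irreducible_pow_mul_of_not_squarefree hb hsf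
  have hd₀ := hd.ne_zero
  have hc₀ : c ≠ 0 := right_ne_zero_of_mul hb
  obtain ⟨x, y, hxy⟩ : IsCoprime (derivative d * c) d :=
    hd.separable.symm.mul_left ((hd.coprime_iff_not_dvd.mpr hdc).symm)
  set s : K[X] := -Polynomial.C ((m + 1 : K)⁻¹) * (a * x)
  have ha : a = -(m + 1) * s * derivative d * c + d * (a * y) := by
    have hinv : Polynomial.C (m + 1 : K) * Polynomial.C ((m + 1 : K)⁻¹) = 1 := by
      rw [← C_mul, mul_inv_cancel₀ (Nat.cast_add_one_ne_zero m), C_1]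
    simp only [map_add, map_natCast, map_one] at hinv
    linear_combination (-a) * hxy - a * x * derivative d * c * hinv
  refine ⟨_, _, _, ⟨s, _, pow_ne_zero _ hd₀, rfl⟩, mul_ne_zero hc₀ (pow_ne_zero _ hd₀), ?_,
    algebraMap_div_eq_quotDeriv_add hd₀ hc₀ ha⟩
  have := hd.natDegree_pos
  rw [natDegree_mul hc₀ (pow_ne_zero _ hd₀), natDegree_mul (pow_ne_zero _ hd₀) hc₀,
    natDegree_pow, natDegree_pow]
  nlinarith

theorem exists_hasAntideriv_add_hasSimplePoles_div [CharZero K] (a : K[X]) {b : K[X]}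
    (hb : b ≠ 0) :
    ∃ g h : K⟮X⟯, HasAntideriv g ∧ HasSimplePoles h ∧
      algebraMap K[X] K⟮X⟯ a / algebraMap K[X] K⟮X⟯ b = g + h := by
  by_cases hsf : Squarefree b
  · exact ⟨0, _, .zero, ⟨a, b, hsf, rfl⟩, (zero_add _).symm⟩
  obtain ⟨g₁, a₁, b₁, hg₁, hb₁, _, hab⟩ := exists_hasAntideriv_add_div_of_not_squarefree a hb hsf
  obtain ⟨g₂, h, hg₂, hh, hab₁⟩ := exists_hasAntideriv_add_hasSimplePoles_div a₁ hb₁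
  exact ⟨g₁ + g₂, h, hg₁.add hg₂, hh, by rw [hab, hab₁, add_assoc]⟩
termination_by b.natDegree

theorem exists_hasAntideriv_add_hasSimplePoles [CharZero K] (f : K⟮X⟯) :
    ∃ g h : K⟮X⟯, HasAntideriv g ∧ HasSimplePoles h ∧ f = g + h := by
  simpa only [num_div_denom] using exists_hasAntideriv_add_hasSimplePoles_div f.num f.denom_ne_zero

end RatFunc

/-- Every rational function `f` over `ℂ` decomposes as `f = g' + h` where `g = p/q` is a
rational function (with derivative `g' = (p'q − pq')/q²`) and `h = a/b` has a squarefree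
denominator, i.e. only simple poles. -/
theorem rational_function_decomposition_simple_poles
    (f : RatFunc ℂ) :
    ∃ p q a b : Polynomial ℂ, q ≠ 0 ∧ Squarefree b ∧
      f = algebraMap (Polynomial ℂ) (RatFunc ℂ) (derivative p * q - p * derivative q) /
            algebraMap (Polynomial ℂ) (RatFunc ℂ) (q ^ 2) +
          algebraMap (Polynomial ℂ) (RatFunc ℂ) a /
            algebraMap (Polynomial ℂ) (RatFunc ℂ) b := by
  obtain ⟨g, h, ⟨p, q, hq, rfl⟩, ⟨a, b, hb, rfl⟩, hf⟩ :=
    RatFunc.exists_hasAntideriv_add_hasSimplePoles f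
  exact ⟨p, q, a, b, hq, hb, hf⟩
end

section
/- Let m₀ and m₁ be the 8×8 complex matrices with m₀ having a 1 in entries (1,2), (2,3), (3,4) and zeros elsewhere, and m₁ having a 1 in entries (1,5), (2,6), (3,7), (4,8) and zeros elsewhere. Then the commutator ⁅m₀, m₁⁆ = m₀·m₁ − m₁·m₀ is nonzero, and the Lie subalgebra of 8×8 complex matrices (with bracket the commutator) generated by {m₀, m₁} has dimension 5 as a complex vector space. -/
/-!
With `N` the nilpotent `4 × 4` shift, `m₀` is the block matrix `diag(N, 0)` and `m₁` carries the
identity in its upper-right `4 × 4` corner. Hence `ad(m₀)ᵏ m₁` carries `Nᵏ` in that corner, which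
vanishes exactly from `k = 4` on. Matrices supported in the upper-right corner multiply to zero, so
they commute; therefore `m₀, m₁, ad(m₀) m₁, ad(m₀)² m₁, ad(m₀)³ m₁` span a subspace closed under
brackets, which is then the Lie algebra generated by `m₀, m₁`. These five matrices are linearly
independent, as their first rows already show.
-/

open Matrix

attribute [local instance] LieRing.ofAssociativeRing

namespace LieSubalgebra

open Submodule

variable {R L : Type*} [CommRing R] [LieRing L] [LieAlgebra R L]

theorem lie_mem_span_of_forall_lie_mem_span {t : Set L}
    (ht : ∀ x ∈ t, ∀ y ∈ t, ⁅x, y⁆ ∈ span R t) {x y : L} (hx : x ∈ span R t)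
    (hy : y ∈ span R t) : ⁅x, y⁆ ∈ span R t := by
  induction hx, hy using span_induction₂ with
  | mem_mem x y hx hy => exact ht x hx y hy
  | zero_left y _ => simp
  | zero_right x _ => simp
  | add_left x y z _ _ _ hx hy => simpa only [add_lie] using add_mem hx hy
  | add_right x y z _ _ _ hx hy => simpa only [lie_add] using add_mem hx hy
  | smul_left r x y _ _ h => simpa only [smul_lie] using smul_mem _ r h
  | smul_right r x y _ _ h => simpa only [lie_smul] using smul_mem _ r h

theorem toSubmodule_lieSpan_eq_span {s t : Set L} (hst : s ⊆ t) (hts : t ⊆ lieSpan R L s)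
    (ht : ∀ x ∈ t, ∀ y ∈ t, ⁅x, y⁆ ∈ span R t) :
    (lieSpan R L s).toSubmodule = span R t := by
  refine le_antisymm ?_ (span_le.mpr hts)
  let K : LieSubalgebra R L :=
    { span R t with lie_mem' := lie_mem_span_of_forall_lie_mem_span ht }
  exact lieSpan_le (K := K) |>.mpr (hst.trans subset_span)

end LieSubalgebra

namespace Matrix

variable {n R : Type*} [CommRing R]

def cornerSubmodule (p : n → Prop) : Submodule R (Matrix n n R) where
  carrier := {A : Matrix n n R | ∀ i j, p i ∨ ¬ p j → A i j = 0}
  add_mem' hA hB i j h := by simp [hA i j h, hB i j h]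
  zero_mem' _ _ _ := zero_apply _ _
  smul_mem' c A hA i j h := by simp [hA i j h]

variable {p : n → Prop}

theorem single_mem_cornerSubmodule [DecidableEq n] {i j : n} (hi : ¬ p i) (hj : p j) (c : R) :
    single i j c ∈ cornerSubmodule p := by
  intro a b h
  rw [single_apply, if_neg]
  rintro ⟨rfl, rfl⟩
  tauto

theorem mul_eq_zero_of_mem_cornerSubmodule [Fintype n] {A B : Matrix n n R}
    (hA : A ∈ cornerSubmodule p) (hB : B ∈ cornerSubmodule p) : A * B = 0 := by
  ext i k
  refine Finset.sum_eq_zero fun j _ => ?_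
  by_cases hj : p j
  · simp [hB j k (.inl hj)]
  · simp [hA i j (.inr hj)]

theorem lie_eq_zero_of_mem_cornerSubmodule [Fintype n] {A B : Matrix n n R}
    (hA : A ∈ cornerSubmodule p) (hB : B ∈ cornerSubmodule p) : ⁅A, B⁆ = 0 := by
  rw [Ring.lie_def, mul_eq_zero_of_mem_cornerSubmodule hA hB,
    mul_eq_zero_of_mem_cornerSubmodule hB hA, sub_zero]

end Matrix

namespace PolylogLie

noncomputable abbrev E (i j : Fin 8) : Matrix (Fin 8) (Fin 8) ℂ := single i j 1

noncomputable def m0 : Matrix (Fin 8) (Fin 8) ℂ := E 0 1 + E 1 2 + E 2 3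
noncomputable def m1 : Matrix (Fin 8) (Fin 8) ℂ := E 0 4 + E 1 5 + E 2 6 + E 3 7
noncomputable def m2 : Matrix (Fin 8) (Fin 8) ℂ := E 0 5 + E 1 6 + E 2 7
noncomputable def m3 : Matrix (Fin 8) (Fin 8) ℂ := E 0 6 + E 1 7
noncomputable def m4 : Matrix (Fin 8) (Fin 8) ℂ := E 0 7

noncomputable def gens : Fin 5 → Matrix (Fin 8) (Fin 8) ℂ := ![m0, m1, m2, m3, m4]

theorem m0_eq : (!![0,1,0,0,0,0,0,0;
         0,0,1,0,0,0,0,0;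
         0,0,0,1,0,0,0,0;
         0,0,0,0,0,0,0,0;
         0,0,0,0,0,0,0,0;
         0,0,0,0,0,0,0,0;
         0,0,0,0,0,0,0,0;
         0,0,0,0,0,0,0,0] : Matrix (Fin 8) (Fin 8) ℂ) = m0 := by
  ext i j
  fin_cases i <;> fin_cases j <;> simp [m0]

theorem m1_eq : (!![0,0,0,0,1,0,0,0;
         0,0,0,0,0,1,0,0;
         0,0,0,0,0,0,1,0;
         0,0,0,0,0,0,0,1;
         0,0,0,0,0,0,0,0;
         0,0,0,0,0,0,0,0;
         0,0,0,0,0,0,0,0;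
         0,0,0,0,0,0,0,0] : Matrix (Fin 8) (Fin 8) ℂ) = m1 := by
  ext i j
  fin_cases i <;> fin_cases j <;> simp [m1]

theorem lie_m0_m1 : ⁅m0, m1⁆ = m2 := by
  simp [m0, m1, m2, Ring.lie_def, add_mul, mul_add, single_mul_single_of_ne]

theorem lie_m0_m2 : ⁅m0, m2⁆ = m3 := by
  simp [m0, m2, m3, Ring.lie_def, add_mul, mul_add, single_mul_single_of_ne]

theorem lie_m0_m3 : ⁅m0, m3⁆ = m4 := by
  simp [m0, m3, m4, Ring.lie_def, add_mul, mul_add, single_mul_single_of_ne]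

theorem lie_m0_m4 : ⁅m0, m4⁆ = 0 := by
  simp [m0, m4, Ring.lie_def, add_mul, mul_add, single_mul_single_of_ne]

theorem gens_succ_mem_cornerSubmodule (k : Fin 4) :
    gens k.succ ∈ cornerSubmodule (4 ≤ ·) := by
  fin_cases k <;>
    · simp only [gens, m1, m2, m3, m4, E]
      apply_rules [add_mem, single_mem_cornerSubmodule] <;> decide

open LieSubalgebra Submodule

theorem lie_m0_gens_mem_span (k : Fin 5) : ⁅m0, gens k⁆ ∈ span ℂ (Set.range gens) := by
  have hmem (i : Fin 5) : gens i ∈ span ℂ (Set.range gens) := subset_span ⟨i, rfl⟩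
  fin_cases k
  · show ⁅m0, m0⁆ ∈ _
    exact (lie_self m0).symm ▸ zero_mem _
  · show ⁅m0, m1⁆ ∈ _
    exact lie_m0_m1 ▸ hmem 2
  · show ⁅m0, m2⁆ ∈ _
    exact lie_m0_m2 ▸ hmem 3
  · show ⁅m0, m3⁆ ∈ _
    exact lie_m0_m3 ▸ hmem 4
  · show ⁅m0, m4⁆ ∈ _
    exact lie_m0_m4 ▸ zero_mem _

theorem lie_gens_mem_span :
    ∀ x ∈ Set.range gens, ∀ y ∈ Set.range gens, ⁅x, y⁆ ∈ span ℂ (Set.range gens) := by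
  rintro _ ⟨i, rfl⟩ _ ⟨j, rfl⟩
  cases i using Fin.cases with
  | zero => exact lie_m0_gens_mem_span j
  | succ i =>
    cases j using Fin.cases with
    | zero =>
      rw [← lie_skew]
      exact neg_mem (lie_m0_gens_mem_span _)
    | succ j =>
      rw [lie_eq_zero_of_mem_cornerSubmodule (gens_succ_mem_cornerSubmodule i)
        (gens_succ_mem_cornerSubmodule j)]
      exact zero_mem _

theorem gens_mem_lieSpan (k : Fin 5) : gens k ∈ lieSpan ℂ _ {m0, m1} := by
  have h0 : m0 ∈ lieSpan ℂ _ {m0, m1} := subset_lieSpan (by simp)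
  have h1 : m1 ∈ lieSpan ℂ _ {m0, m1} := subset_lieSpan (by simp)
  have h2 : m2 ∈ lieSpan ℂ _ {m0, m1} := lie_m0_m1 ▸ lie_mem _ h0 h1
  have h3 : m3 ∈ lieSpan ℂ _ {m0, m1} := lie_m0_m2 ▸ lie_mem _ h0 h2
  have h4 : m4 ∈ lieSpan ℂ _ {m0, m1} := lie_m0_m3 ▸ lie_mem _ h0 h3
  fin_cases k
  exacts [h0, h1, h2, h3, h4]

theorem toSubmodule_lieSpan_m0_m1 :
    (lieSpan ℂ _ {m0, m1}).toSubmodule = span ℂ (Set.range gens) := by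
  refine toSubmodule_lieSpan_eq_span ?_ ?_ lie_gens_mem_span
  · rintro _ (rfl | rfl)
    exacts [⟨0, rfl⟩, ⟨1, rfl⟩]
  · rintro _ ⟨k, rfl⟩
    exact gens_mem_lieSpan k

theorem linearIndependent_gens : LinearIndependent ℂ gens := by
  let col : Fin 5 → Fin 8 := ![1, 4, 5, 6, 7]
  refine .of_pairwise_dual_eq_zero_one _ (fun k => entryLinearMap ℂ ℂ 0 (col k)) ?_ ?_
  · intro i j hij
    fin_cases i <;> fin_cases j <;> simp_all [col, gens, m0, m1, m2, m3, m4]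
  · intro i
    fin_cases i <;> simp [col, gens, m0, m1, m2, m3, m4]

theorem finrank_lieSpan_m0_m1 : Module.finrank ℂ (lieSpan ℂ _ {m0, m1}) = 5 := by
  calc Module.finrank ℂ (lieSpan ℂ _ {m0, m1})
      = Module.finrank ℂ (lieSpan ℂ _ {m0, m1}).toSubmodule := rfl
    _ = 5 := by
      rw [toSubmodule_lieSpan_m0_m1, finrank_span_eq_card linearIndependent_gens,
        Fintype.card_fin]

end PolylogLie

/-- The matrices `m₀` and `m₁` arising from the Galois action on polylogarithms do not
commute, and the Lie algebra they generate has dimension 5. -/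
theorem polylog_lie_algebra_dim_five :
    ⁅(!![0,1,0,0,0,0,0,0;
         0,0,1,0,0,0,0,0;
         0,0,0,1,0,0,0,0;
         0,0,0,0,0,0,0,0;
         0,0,0,0,0,0,0,0;
         0,0,0,0,0,0,0,0;
         0,0,0,0,0,0,0,0;
         0,0,0,0,0,0,0,0] : Matrix (Fin 8) (Fin 8) ℂ),
      (!![0,0,0,0,1,0,0,0;
         0,0,0,0,0,1,0,0;
         0,0,0,0,0,0,1,0;
         0,0,0,0,0,0,0,1;
         0,0,0,0,0,0,0,0;
         0,0,0,0,0,0,0,0;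
         0,0,0,0,0,0,0,0;
         0,0,0,0,0,0,0,0] : Matrix (Fin 8) (Fin 8) ℂ)⁆ ≠ 0 ∧
    Module.finrank ℂ
      (LieSubalgebra.lieSpan ℂ (Matrix (Fin 8) (Fin 8) ℂ)
        {!![0,1,0,0,0,0,0,0;
            0,0,1,0,0,0,0,0;
            0,0,0,1,0,0,0,0;
            0,0,0,0,0,0,0,0;
            0,0,0,0,0,0,0,0;
            0,0,0,0,0,0,0,0;
            0,0,0,0,0,0,0,0;
            0,0,0,0,0,0,0,0],
         !![0,0,0,0,1,0,0,0;
            0,0,0,0,0,1,0,0;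
            0,0,0,0,0,0,1,0;
            0,0,0,0,0,0,0,1;
            0,0,0,0,0,0,0,0;
            0,0,0,0,0,0,0,0;
            0,0,0,0,0,0,0,0;
            0,0,0,0,0,0,0,0]}) = 5 := by
  rw [PolylogLie.m0_eq, PolylogLie.m1_eq, PolylogLie.lie_m0_m1]
  exact ⟨PolylogLie.linearIndependent_gens.ne_zero 2, PolylogLie.finrank_lieSpan_m0_m1⟩
end
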